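/- For every integer E with E ≡ 2 (mod 4) and E ≥ 6, the truncated Catalan product √2_E = (2²/(1·3))·(6²/(5·7))···((E-4)²/((E-5)(E-3)))·(E/(E-1)) satisfies √2 < √2_E. -/

import Mathlib

/-!
Splitting Euler's sine product for `sin (2πx)` into odd and even factors gives the cosine product
`cos (πx) = ∏ₖ (1 - 4x²/(2k+1)²)`; at `x = 1/4` its factors are the reciprocals of Catalan's,
so the partial products `P_j` tend to `1 / cos (π/4) = √2`. The truncation
`√2_{4j+2} = P_j · (4j+2)/(4j+1)` also tends to `√2` and is strictly decreasing in `j`,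
because the ratio of consecutive terms is `(4j+2)(4j+6) / ((4j+3)(4j+5)) < 1`.
-/

open Filter Real Finset Topology

/-- The truncated Catalan product
`√2_E = (2²/(1·3))·(6²/(5·7))···((E-4)²/((E-5)(E-3)))·(E/(E-1))` for `E ≡ 2 (mod 4)`. -/
noncomputable def catalanTrunc (E : ℕ) : ℝ :=
  (∏ k ∈ Finset.range ((E - 2) / 4),
    (4 * (k : ℝ) + 2) ^ 2 / ((4 * k + 1) * (4 * k + 3))) * ((E : ℝ) / (E - 1))

theorem Finset.prod_range_two_mul {M : Type*} [CommMonoid M] (f : ℕ → M) (n : ℕ) :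
    ∏ k ∈ range (2 * n), f k = ∏ k ∈ range n, (f (2 * k) * f (2 * k + 1)) := by
  induction n with
  | zero => simp
  | succ n ih => rw [mul_add_one, prod_range_succ, prod_range_succ, prod_range_succ, ih, mul_assoc]

theorem Real.tendsto_euler_cos_prod {x : ℝ} (hx : sin (π * x) ≠ 0) :
    Tendsto (fun n : ℕ => ∏ k ∈ range n, (1 - 4 * x ^ 2 / (2 * (k : ℝ) + 1) ^ 2))
      atTop (𝓝 (cos (π * x))) := by
  set S : ℕ → ℝ := fun n => π * x * ∏ k ∈ range n, (1 - x ^ 2 / ((k : ℝ) + 1) ^ 2)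
  set C : ℕ → ℝ := fun n => ∏ k ∈ range n, (1 - 4 * x ^ 2 / (2 * (k : ℝ) + 1) ^ 2)
  have hS : Tendsto S atTop (𝓝 (sin (π * x))) := tendsto_euler_sin_prod x
  have hsplit (n : ℕ) :
      π * (2 * x) * ∏ k ∈ range (2 * n), (1 - (2 * x) ^ 2 / ((k : ℝ) + 1) ^ 2)
        = 2 * S n * C n := by
    simp only [S, C, prod_range_two_mul, prod_mul_distrib]
    push_cast
    have hodd (k : ℕ) :
        1 - (2 * x) ^ 2 / (2 * (k : ℝ) + 1) ^ 2 = 1 - 4 * x ^ 2 / (2 * k + 1) ^ 2 := by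
      ring
    have heven (k : ℕ) :
        1 - (2 * x) ^ 2 / (2 * (k : ℝ) + 1 + 1) ^ 2 = 1 - x ^ 2 / ((k : ℝ) + 1) ^ 2 := by
      field_simp
      ring
    simp only [hodd, heven]
    ring
  have hSC : Tendsto (fun n => 2 * S n * C n) atTop (𝓝 (sin (π * (2 * x)))) :=
    ((tendsto_euler_sin_prod (2 * x)).comp (tendsto_id.const_mul_atTop' two_pos)).congr hsplit
  have hlim := hSC.div (hS.const_mul 2) (mul_ne_zero two_ne_zero hx)
  rw [mul_left_comm, sin_two_mul, mul_div_cancel_left₀ _ (mul_ne_zero two_ne_zero hx)] at hlim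
  refine hlim.congr' ?_
  filter_upwards [hS.eventually_ne hx] with n hn
  simp only [Pi.div_apply]
  field_simp

noncomputable def catalanPartialProd (n : ℕ) : ℝ :=
  ∏ k ∈ range n, (4 * (k : ℝ) + 2) ^ 2 / ((4 * k + 1) * (4 * k + 3))

theorem catalanPartialProd_pos (n : ℕ) : 0 < catalanPartialProd n :=
  prod_pos fun k _ => by positivity

theorem tendsto_catalanPartialProd : Tendsto catalanPartialProd atTop (𝓝 √2) := by
  have hsin : sin (π * (1 / 4)) ≠ 0 := by rw [mul_one_div, sin_pi_div_four]; positivity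
  have hcos : cos (π * (1 / 4)) = √2 / 2 := by rw [mul_one_div, cos_pi_div_four]
  have h := (tendsto_euler_cos_prod hsin).inv₀ (by rw [hcos]; positivity)
  rw [hcos, inv_div, div_sqrt] at h
  refine h.congr fun n => ?_
  rw [catalanPartialProd, ← prod_inv_distrib]
  refine prod_congr rfl fun k _ => ?_
  have hfactor : 1 - 4 * (1 / 4) ^ 2 / (2 * (k : ℝ) + 1) ^ 2
      = (4 * k + 1) * (4 * k + 3) / (4 * k + 2) ^ 2 := by
    field_simp
    ring
  rw [hfactor, inv_div]

theorem catalanTrunc_four_mul_add_two (j : ℕ) :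
    catalanTrunc (4 * j + 2) = catalanPartialProd j * ((4 * j + 2) / (4 * j + 1)) := by
  rw [catalanTrunc, catalanPartialProd, show (4 * j + 2 - 2) / 4 = j by omega]
  push_cast
  ring

theorem strictAnti_catalanTrunc_four_mul_add_two :
    StrictAnti fun j : ℕ => catalanTrunc (4 * j + 2) := by
  refine strictAnti_nat_of_succ_lt fun j => ?_
  simp only [catalanTrunc_four_mul_add_two, catalanPartialProd, prod_range_succ, mul_assoc]
  refine mul_lt_mul_of_pos_left ?_ (catalanPartialProd_pos j)
  push_cast
  rw [div_mul_div_comm, div_lt_div_iff₀ (by positivity) (by positivity)]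
  nlinarith

theorem tendsto_catalanTrunc_four_mul_add_two :
    Tendsto (fun j : ℕ => catalanTrunc (4 * j + 2)) atTop (𝓝 √2) := by
  have hlin : Tendsto (fun j : ℕ => 4 * (j : ℝ) + 1) atTop atTop :=
    tendsto_atTop_add_const_right _ _ (tendsto_natCast_atTop_atTop.const_mul_atTop four_pos)
  have hfactor : Tendsto (fun j : ℕ => ((4 * j + 2) / (4 * j + 1) : ℝ)) atTop (𝓝 1) := by
    have h := tendsto_const_nhds (x := (1 : ℝ)).add hlin.inv_tendsto_atTop
    rw [add_zero] at h
    refine h.congr fun j => ?_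
    simp only [Pi.inv_apply]
    field_simp
    ring
  simpa only [catalanTrunc_four_mul_add_two, mul_one] using tendsto_catalanPartialProd.mul hfactor

theorem catalan_trunc_gt_sqrt_two_general (E : ℕ) (hE : E % 4 = 2) :
    Real.sqrt 2 < catalanTrunc E := by
  obtain ⟨j, rfl⟩ : ∃ j, E = 4 * j + 2 := ⟨E / 4, by omega⟩
  exact (strictAnti_catalanTrunc_four_mul_add_two.antitone.le_of_tendsto
    tendsto_catalanTrunc_four_mul_add_two (j + 1)).trans_lt
    (strictAnti_catalanTrunc_four_mul_add_two j.lt_succ_self)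

theorem catalan_trunc_gt_sqrt_two (E : ℕ) (hE : E % 4 = 2) (hE6 : 6 ≤ E) :
    Real.sqrt 2 < catalanTrunc E :=
  catalan_trunc_gt_sqrt_two_general E hE
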